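/- Let 𝒳 = span{X_1, …, X_k} ⊂ 𝔽^{n×n} (𝔽 = ℝ or ℂ) be a k-dimensional subspace and let X_* ∈ 𝒳 be a spectral approximation of Y ∈ 𝔽^{n×n} \ 𝒳. If dim(Σ_{Y−X_*}) = 1, i.e., the maximal singular value of Y − X_* is simple, then max_{‖v‖₂=1} min_{X∈𝒳} ‖(Y − X)v‖₂ = min_{X∈𝒳} ‖Y − X‖₂. -/

import Mathlib

open Matrix

variable {𝕜 : Type*} [RCLike 𝕜]

/-- The spectral norm (matrix 2-norm): the supremum of `‖A v‖₂` over unit Euclidean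
norm vectors `v`. -/
noncomputable def specNorm {m : Type*} [Fintype m] [DecidableEq m]
    (A : Matrix m m 𝕜) : ℝ :=
  sSup {r : ℝ | ∃ v : EuclideanSpace 𝕜 m, ‖v‖ = 1 ∧ r = ‖Matrix.toEuclideanLin A v‖}

/-- `Xs` is a spectral (best) approximation of `Y` from the subspace `𝒳`. -/
def IsSpectralApprox {m : Type*} [Fintype m] [DecidableEq m]
    (𝒳 : Submodule 𝕜 (Matrix m m 𝕜)) (Y Xs : Matrix m m 𝕜) : Prop :=
  Xs ∈ 𝒳 ∧ ∀ X ∈ 𝒳, specNorm (Y - Xs) ≤ specNorm (Y - X)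

/-- The span of the maximal right singular vectors of `M`. -/
noncomputable def maxRSV {m : Type*} [Fintype m] [DecidableEq m]
    (M : Matrix m m 𝕜) : Submodule 𝕜 (EuclideanSpace 𝕜 m) :=
  Submodule.span 𝕜 {v : EuclideanSpace 𝕜 m | ‖v‖ = 1 ∧ ‖Matrix.toEuclideanLin M v‖ = specNorm M}

/-- The `k`-dimensional field of the `k` matrices `A 0, …, A (k-1)` restricted to
the subspace `S`. -/
def kField {m : Type*} [Fintype m] [DecidableEq m] {k : ℕ}
    (A : Fin k → Matrix m m 𝕜) (S : Submodule 𝕜 (EuclideanSpace 𝕜 m)) : Set (Fin k → 𝕜) :=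
  {w | ∃ v : EuclideanSpace 𝕜 m, v ∈ S ∧ ‖v‖ = 1 ∧
     w = fun i => (inner 𝕜 v (Matrix.toEuclideanLin (A i) v) : 𝕜)}

/-- min-max value -/
noncomputable def minMaxVal {m : Type*} [Fintype m] [DecidableEq m]
    (𝒳 : Submodule 𝕜 (Matrix m m 𝕜)) (Y : Matrix m m 𝕜) : ℝ :=
  sInf {r : ℝ | ∃ X ∈ 𝒳, r = specNorm (Y - X)}

/-- max-min value -/
noncomputable def maxMinVal {m : Type*} [Fintype m] [DecidableEq m]
    (𝒳 : Submodule 𝕜 (Matrix m m 𝕜)) (Y : Matrix m m 𝕜) : ℝ :=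
  sSup {r : ℝ | ∃ v : EuclideanSpace 𝕜 m, ‖v‖ = 1 ∧
    r = sInf {s : ℝ | ∃ X ∈ 𝒳, s = ‖Matrix.toEuclideanLin (Y - X) v‖}}

/-- dual norm of a linear functional w.r.t. the spectral norm -/
noncomputable def dualNorm {m : Type*} [Fintype m] [DecidableEq m]
    (f : Matrix m m 𝕜 →ₗ[𝕜] 𝕜) : ℝ :=
  sSup {r : ℝ | ∃ A : Matrix m m 𝕜, specNorm A = 1 ∧ r = ‖f A‖}

/-- the rank one matrix `u vᴴ` -/
def outer {m : Type*} (u v : EuclideanSpace 𝕜 m) : Matrix m m 𝕜 :=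
  Matrix.of fun i j => u i * star (v j)

/-- nuclear (Schatten 1) norm: the sum of the singular values -/
noncomputable def nuclearNorm {m : Type*} [Fintype m] [DecidableEq m]
    (F : Matrix m m 𝕜) : ℝ :=
  ∑ i, Real.sqrt ((Matrix.isHermitian_conjTranspose_mul_self F).eigenvalues i)

/-!
Write `A = Y - Xs` and let `v` be a unit vector with `‖A v‖ = ‖A‖`. Because the maximal right
singular vectors of `A` only span the line `𝕜 v`, moving `A` in a direction `-B` with
`re ⟪A v, B v⟫ > 0` strictly decreases its norm: unit vectors that nearly attain `‖A - t B‖`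
lie close to that line, where `‖(A - t B) x‖² ≈ ‖A x‖² - 2 t re ⟪A x, B x⟫`. Optimality of `Xs`
thus forces `re ⟪A v, B v⟫ = 0` for all `B ∈ 𝒳`, whence
`‖(Y - X) v‖² = ‖A v‖² + ‖(Xs - X) v‖² ≥ ‖A‖²` for every `X ∈ 𝒳`: the vector `v` attains the
max-min value, and it equals `‖A‖`, the min-max value.
-/

open Metric RCLike
open scoped InnerProductSpace

section InnerProductSpace

variable {E F : Type*} [NormedAddCommGroup E] [InnerProductSpace 𝕜 E]
  [NormedAddCommGroup F] [InnerProductSpace 𝕜 F]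

lemma two_mul_re_inner_le_of_norm_le_norm_sub_smul {p q : F} {t : ℝ} (ht : 0 < t)
    (h : ‖p‖ ≤ ‖p - (t : 𝕜) • q‖) : 2 * re ⟪p, q⟫_𝕜 ≤ t * ‖q‖ ^ 2 := by
  have hsq : ‖p‖ ^ 2 ≤ ‖p - (t : 𝕜) • q‖ ^ 2 := by gcongr
  rw [@norm_sub_sq 𝕜, inner_smul_right, re_ofReal_mul, norm_smul, norm_ofReal,
    abs_of_pos ht] at hsq
  nlinarith

namespace ContinuousLinearMap

variable [FiniteDimensional 𝕜 E]

lemma exists_norm_eq_one_norm_apply_eq_opNorm [Nontrivial E] (T : E →L[𝕜] F) :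
    ∃ x, ‖x‖ = 1 ∧ ‖T x‖ = ‖T‖ := by
  have := FiniteDimensional.proper_rclike 𝕜 E
  have hne := Set.nonempty_coe_sort.1
    (NormedSpace.sphere_nonempty_rclike 𝕜 (E := E) zero_le_one)
  obtain ⟨x, hx, hTx⟩ := ((isCompact_sphere (0 : E) 1).image
    (by fun_prop : Continuous fun x => ‖T x‖)).sSup_mem (hne.image _)
  exact ⟨x, mem_sphere_zero_iff_norm.1 hx, hTx.trans T.sSup_sphere_eq_norm⟩

/-- The positive function `φ` below has a positive minimum on the unit sphere, while for a unit
vector `x` with `‖(T - t S) x‖ = ‖T - t S‖ ≥ ‖T‖` both `‖T‖ - ‖T x‖` and `re ⟪T x, S x⟫` are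
`O(t)`. -/
theorem exists_pos_norm_sub_smul_lt {T S : E →L[𝕜] F} {v : E}
    (hline : ∀ x, ‖x‖ = 1 → ‖T x‖ = ‖T‖ → x ∈ 𝕜 ∙ v) (hpos : 0 < re ⟪T v, S v⟫_𝕜) :
    ∃ t : ℝ, 0 < t ∧ ‖T - (t : 𝕜) • S‖ < ‖T‖ := by
  have : Nontrivial E := ⟨⟨v, 0, by rintro rfl; simp at hpos⟩⟩
  have := FiniteDimensional.proper_rclike 𝕜 E
  set φ : E → ℝ := fun x => max (‖T‖ - ‖T x‖) (re ⟪T x, S x⟫_𝕜)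
  have hφ_pos : ∀ x ∈ sphere (0 : E) 1, 0 < φ x := by
    intro x hx
    rw [mem_sphere_zero_iff_norm] at hx
    rcases ((T.le_opNorm x).trans_eq (by rw [hx, mul_one])).lt_or_eq with hlt | heq
    · exact lt_max_of_lt_left (sub_pos.2 hlt)
    · obtain ⟨c, rfl⟩ := Submodule.mem_span_singleton.1 (hline x hx heq)
      have hc : c ≠ 0 := by rintro rfl; simp at hx
      refine lt_max_of_lt_right ?_
      rw [map_smul, map_smul, inner_smul_left, inner_smul_right, ← mul_assoc, RCLike.conj_mul,
        ← ofReal_pow, re_ofReal_mul]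
      positivity
  obtain ⟨x₀, hx₀, hmin⟩ := (isCompact_sphere (0 : E) 1).exists_isMinOn
    (Set.nonempty_coe_sort.1 (NormedSpace.sphere_nonempty_rclike 𝕜 zero_le_one))
    (by fun_prop : Continuous φ).continuousOn
  have hε : 0 < φ x₀ := hφ_pos x₀ hx₀
  set t := φ x₀ / (1 + ‖S‖ + ‖S‖ ^ 2)
  have ht : 0 < t := by positivity
  have htε : t * (1 + ‖S‖ + ‖S‖ ^ 2) = φ x₀ := div_mul_cancel₀ _ (by positivity)
  refine ⟨t, ht, lt_of_not_ge fun hge => ?_⟩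
  obtain ⟨x, hx, hxT⟩ := (T - (t : 𝕜) • S).exists_norm_eq_one_norm_apply_eq_opNorm
  rw [_root_.sub_apply, _root_.smul_apply] at hxT
  have hTx : ‖T x‖ ≤ ‖T‖ := by simpa [hx] using T.le_opNorm x
  have hSx : ‖S x‖ ≤ ‖S‖ := by simpa [hx] using S.le_opNorm x
  have hdrop : ‖T‖ - ‖T x‖ ≤ t * ‖S‖ := by
    have := norm_sub_le (T x) ((t : 𝕜) • S x)
    rw [norm_smul, norm_ofReal, abs_of_pos ht] at this
    nlinarith
  have hre := two_mul_re_inner_le_of_norm_le_norm_sub_smul ht (hTx.trans (hge.trans hxT.ge))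
  have hSx2 : t * ‖S x‖ ^ 2 ≤ t * ‖S‖ ^ 2 := by gcongr
  have hφx : φ x₀ ≤ max (‖T‖ - ‖T x‖) (re ⟪T x, S x⟫_𝕜) := hmin (mem_sphere_zero_iff_norm.2 hx)
  rcases le_max_iff.1 hφx with h | h <;> nlinarith [norm_nonneg S, sq_nonneg ‖S‖]

variable {T : E →L[𝕜] F} {v : E} {V : Submodule 𝕜 (E →L[𝕜] F)}

theorem re_inner_apply_eq_zero_of_forall_norm_le_norm_sub
    (hbest : ∀ S ∈ V, ‖T‖ ≤ ‖T - S‖) (hline : ∀ x, ‖x‖ = 1 → ‖T x‖ = ‖T‖ → x ∈ 𝕜 ∙ v)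
    {S : E →L[𝕜] F} (hS : S ∈ V) : re ⟪T v, S v⟫_𝕜 = 0 := by
  have hnonpos : ∀ S ∈ V, re ⟪T v, S v⟫_𝕜 ≤ 0 := fun S hS => not_lt.1 fun hpos =>
    let ⟨_, _, hlt⟩ := exists_pos_norm_sub_smul_lt hline hpos
    (hbest _ (V.smul_mem _ hS)).not_gt hlt
  have := hnonpos (-S) (V.neg_mem hS)
  rw [_root_.neg_apply, inner_neg_right, map_neg] at this
  linarith [hnonpos S hS]

theorem norm_apply_le_norm_sub_apply_of_forall_norm_le_norm_sub
    (hbest : ∀ S ∈ V, ‖T‖ ≤ ‖T - S‖) (hline : ∀ x, ‖x‖ = 1 → ‖T x‖ = ‖T‖ → x ∈ 𝕜 ∙ v)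
    {S : E →L[𝕜] F} (hS : S ∈ V) : ‖T v‖ ≤ ‖(T - S) v‖ := by
  have hpyth : ‖(T - S) v‖ ^ 2 = ‖T v‖ ^ 2 + ‖S v‖ ^ 2 := by
    rw [_root_.sub_apply, @norm_sub_sq 𝕜,
      re_inner_apply_eq_zero_of_forall_norm_le_norm_sub hbest hline hS]
    ring
  nlinarith [norm_nonneg (T v), norm_nonneg ((T - S) v), sq_nonneg ‖S v‖]

end ContinuousLinearMap

end InnerProductSpace

section Matrix

variable {m : Type*} [Fintype m] [DecidableEq m]

lemma specNorm_eq_norm_toEuclideanCLM (A : Matrix m m 𝕜) :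
    specNorm A = ‖toEuclideanCLM (n := m) (𝕜 := 𝕜) A‖ := by
  rw [specNorm, ← ContinuousLinearMap.sSup_sphere_eq_norm]
  congr 1
  ext r
  simp only [Set.mem_ofPred_eq, Set.mem_image, mem_sphere_zero_iff_norm]
  exact exists_congr fun v => and_congr_right fun _ => eq_comm

lemma norm_toEuclideanLin_apply_le_specNorm (A : Matrix m m 𝕜) {v : EuclideanSpace 𝕜 m}
    (hv : ‖v‖ = 1) : ‖toEuclideanLin A v‖ ≤ specNorm A := by
  rw [specNorm_eq_norm_toEuclideanCLM]
  exact ((toEuclideanCLM (n := m) (𝕜 := 𝕜) A).le_opNorm v).trans_eq (by rw [hv, mul_one])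

lemma mem_span_singleton_of_finrank_maxRSV_eq_one {A : Matrix m m 𝕜}
    (hA : Module.finrank 𝕜 (maxRSV A) = 1) {v : EuclideanSpace 𝕜 m} (hv : ‖v‖ = 1)
    (hAv : ‖toEuclideanLin A v‖ = specNorm A) {x : EuclideanSpace 𝕜 m} (hx : ‖x‖ = 1)
    (hAx : ‖toEuclideanLin A x‖ = specNorm A) : x ∈ 𝕜 ∙ v := by
  have hv0 : v ≠ 0 := by rintro rfl; simp at hv
  have hspan : 𝕜 ∙ v = maxRSV A :=
    Submodule.eq_of_le_of_finrank_eq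
      ((Submodule.span_singleton_le_iff_mem _ _).2 (Submodule.subset_span ⟨hv, hAv⟩))
      ((finrank_span_singleton hv0).trans hA.symm)
  exact hspan ▸ Submodule.subset_span ⟨hx, hAx⟩

lemma minMaxVal_eq_of_isSpectralApprox {𝒳 : Submodule 𝕜 (Matrix m m 𝕜)} {Y Xs : Matrix m m 𝕜}
    (h : IsSpectralApprox 𝒳 Y Xs) : minMaxVal 𝒳 Y = specNorm (Y - Xs) :=
  IsLeast.csInf_eq ⟨⟨Xs, h.1, rfl⟩, by rintro r ⟨X, hX, rfl⟩; exact h.2 X hX⟩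

lemma maxMinVal_eq_of_forall_specNorm_le {𝒳 : Submodule 𝕜 (Matrix m m 𝕜)}
    {Y Xs : Matrix m m 𝕜} (hXs : Xs ∈ 𝒳) {v : EuclideanSpace 𝕜 m} (hv : ‖v‖ = 1)
    (h : ∀ X ∈ 𝒳, specNorm (Y - Xs) ≤ ‖toEuclideanLin (Y - X) v‖) :
    maxMinVal 𝒳 Y = specNorm (Y - Xs) := by
  have hbdd (w : EuclideanSpace 𝕜 m) :
      BddBelow {s : ℝ | ∃ X ∈ 𝒳, s = ‖toEuclideanLin (Y - X) w‖} :=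
    ⟨0, by rintro s ⟨X, -, rfl⟩; positivity⟩
  unfold maxMinVal
  refine IsGreatest.csSup_eq ⟨⟨v, hv, ?_⟩, ?_⟩
  · symm
    refine IsLeast.csInf_eq ⟨⟨Xs, hXs, ?_⟩, by rintro s ⟨X, hX, rfl⟩; exact h X hX⟩
    exact le_antisymm (h Xs hXs) (norm_toEuclideanLin_apply_le_specNorm _ hv)
  · rintro r ⟨w, hw, rfl⟩
    exact (csInf_le (hbdd w) ⟨Xs, hXs, rfl⟩).trans (norm_toEuclideanLin_apply_le_specNorm _ hw)

end Matrix

theorem stmt17_general {n : ℕ} (𝒳 : Submodule 𝕜 (Matrix (Fin n) (Fin n) 𝕜))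
    (Y Xs : Matrix (Fin n) (Fin n) 𝕜)
    (happrox : IsSpectralApprox 𝒳 Y Xs)
    (hSig : Module.finrank 𝕜 (maxRSV (Y - Xs)) = 1) :
    maxMinVal 𝒳 Y = minMaxVal 𝒳 Y := by
  let L := (toEuclideanCLM (n := Fin n) (𝕜 := 𝕜)).toAlgEquiv.toLinearMap
  have hL (A : Matrix (Fin n) (Fin n) 𝕜) : specNorm A = ‖L A‖ :=
    specNorm_eq_norm_toEuclideanCLM A
  have : Nontrivial (EuclideanSpace 𝕜 (Fin n)) :=
    have := Module.nontrivial_of_finrank_eq_succ hSig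
    (maxRSV (Y - Xs)).subtype_injective.nontrivial
  obtain ⟨v, hv, hTv⟩ := (L (Y - Xs)).exists_norm_eq_one_norm_apply_eq_opNorm
  have hline (x) (hx : ‖x‖ = 1) (hTx : ‖L (Y - Xs) x‖ = ‖L (Y - Xs)‖) : x ∈ 𝕜 ∙ v :=
    mem_span_singleton_of_finrank_maxRSV_eq_one hSig hv (hTv.trans (hL _).symm) hx
      (hTx.trans (hL _).symm)
  have hbest : ∀ S ∈ 𝒳.map L, ‖L (Y - Xs)‖ ≤ ‖L (Y - Xs) - S‖ := by
    rintro _ ⟨X, hX, rfl⟩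
    rw [← map_sub, ← hL, ← hL, sub_sub]
    exact happrox.2 (Xs + X) (𝒳.add_mem happrox.1 hX)
  rw [minMaxVal_eq_of_isSpectralApprox happrox, maxMinVal_eq_of_forall_specNorm_le happrox.1 hv]
  intro X hX
  have := (L (Y - Xs)).norm_apply_le_norm_sub_apply_of_forall_norm_le_norm_sub hbest hline
    (Submodule.mem_map_of_mem (𝒳.sub_mem hX happrox.1))
  rwa [← map_sub, sub_sub_sub_cancel_right, hTv, ← hL] at this

theorem stmt17 {n k : ℕ} (𝒳 : Submodule 𝕜 (Matrix (Fin n) (Fin n) 𝕜))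
    (hdim : Module.finrank 𝕜 𝒳 = k)
    (Y Xs : Matrix (Fin n) (Fin n) 𝕜) (hY : Y ∉ 𝒳)
    (happrox : IsSpectralApprox 𝒳 Y Xs)
    (hSig : Module.finrank 𝕜 (maxRSV (Y - Xs)) = 1) :
    maxMinVal 𝒳 Y = minMaxVal 𝒳 Y :=
  stmt17_general 𝒳 Y Xs happrox hSig
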